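/- Let Ω₁ and Ω₂ be spheres in ℝ³ with distinct centers o₁, o₂ and radii r₁ ≠ r₂ (both positive) whose intersection Ω₁ ∩ Ω₂ is a nonempty circle σ, and let S be their external homothety center. Let Γ be the sphere centered at S passing through σ. Then for every point p ∈ σ, the angle between Γ and Ω₁ at p equals the angle between Γ and Ω₂ at p; that is, Γ bisects the spheres Ω₁ and Ω₂. -/
import Mathlib


open scoped RealInnerProductSpace

noncomputable section

abbrev Pt := EuclideanSpace ℝ (Fin 3)

/-- The angle in `[0, π/2]` between the lines directed by `u` and `v`. -/
def lineAngle (u v : Pt) : ℝ := Real.arccos (|⟪u, v⟫| / (‖u‖ * ‖v‖))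

/-- Let `Ω₁`, `Ω₂` be spheres with distinct centers `o₁ ≠ o₂` and distinct positive
radii `r₁ ≠ r₂`, intersecting in a nonempty circle `σ` (nonempty and containing a point
off the line `o₁o₂`), let `S` be their external homothety center, and let `Γ` be the
sphere centered at `S` passing through `σ`. Then at every point `p ∈ σ` the angle
between `Γ` and `Ω₁` equals the angle between `Γ` and `Ω₂`: `Γ` bisects `Ω₁`, `Ω₂`. -/
theorem sphere_centered_at_external_homothety_center_bisects
    (o₁ o₂ : Pt) (r₁ r₂ : ℝ) (hr₁ : 0 < r₁) (hr₂ : 0 < r₂)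
    (ho : o₁ ≠ o₂) (hr : r₁ ≠ r₂)
    (hnonempty : (Metric.sphere o₁ r₁ ∩ Metric.sphere o₂ r₂).Nonempty)
    (hcircle : ∃ q ∈ Metric.sphere o₁ r₁ ∩ Metric.sphere o₂ r₂,
        q ∉ affineSpan ℝ ({o₁, o₂} : Set Pt))
    (S : Pt) (k : ℝ) (hk : 0 < k) (hS : o₂ - S = k • (o₁ - S)) (hkr : r₂ = k * r₁)
    (ρ : ℝ) (hρ : 0 < ρ)
    (hΓ : Metric.sphere o₁ r₁ ∩ Metric.sphere o₂ r₂ ⊆ Metric.sphere S ρ) :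
    ∀ p ∈ Metric.sphere o₁ r₁ ∩ Metric.sphere o₂ r₂,
      lineAngle (S - p) (o₁ - p) = lineAngle (S - p) (o₂ - p) := by
  intro p hp
  obtain ⟨hp1, hp2⟩ := hp
  have hpS : dist p S = ρ := hΓ ⟨hp1, hp2⟩
  have h1 : ‖o₁ - p‖ = r₁ := by
    rw [norm_sub_rev]; simpa [dist_eq_norm] using hp1
  have h2 : ‖o₂ - p‖ = r₂ := by
    rw [norm_sub_rev]; simpa [dist_eq_norm] using hp2
  have hSp : ‖S - p‖ = ρ := by
    rw [norm_sub_rev]; simpa [dist_eq_norm] using hpS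
  have hk1 : k ≠ 1 := by
    intro h; exact hr ((hkr.trans (by rw [h, one_mul])).symm)
  have hw : o₂ - p = k • (o₁ - p) + (1 - k) • (S - p) := by
    have h := hS
    rw [sub_eq_iff_eq_add] at h
    subst h
    module
  set A : ℝ := ⟪S - p, o₁ - p⟫ with hA
  -- norm relation gives 2k(1-k)A + (1-k)²ρ² = 0
  have halg : 2 * k * (1 - k) * A + (1 - k) ^ 2 * ρ ^ 2 = 0 := by
    have hn : ‖o₂ - p‖ ^ 2 =
        ‖k • (o₁ - p)‖ ^ 2 + 2 * ⟪k • (o₁ - p), (1 - k) • (S - p)⟫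
          + ‖(1 - k) • (S - p)‖ ^ 2 := by
      rw [hw]; exact norm_add_sq_real _ _
    rw [h2, hkr, norm_smul, norm_smul, real_inner_smul_left, real_inner_smul_right,
      real_inner_comm, ← hA, h1, hSp] at hn
    rw [Real.norm_eq_abs, Real.norm_eq_abs, abs_of_pos hk] at hn
    nlinarith [sq_abs (1 - k), hn]
  have hkey : 2 * k * A + (1 - k) * ρ ^ 2 = 0 := by
    have h1k : (1 : ℝ) - k ≠ 0 := sub_ne_zero.mpr (Ne.symm hk1)
    have : (1 - k) * (2 * k * A + (1 - k) * ρ ^ 2) = 0 := by ring_nf; ring_nf at halg; linarith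
    rcases mul_eq_zero.mp this with h | h
    · exact absurd h h1k
    · exact h
  have hinner2 : ⟪S - p, o₂ - p⟫ = -(k * A) := by
    rw [hw, inner_add_right, real_inner_smul_right, real_inner_smul_right,
      real_inner_self_eq_norm_sq, hSp, ← hA]
    linarith [hkey]
  unfold lineAngle
  rw [hinner2, ← hA, abs_neg, abs_mul, abs_of_pos hk, hSp, h1, h2, hkr]
  congr 1
  rw [mul_comm k r₁, ← mul_assoc, mul_comm k |A|, mul_div_mul_right _ _ (ne_of_gt hk)]

end
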